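/- arXiv:1802.03948 — 6 statements merged into one kernel-verified Lean document; each statement's English description precedes it below -/
import Mathlib

section
/- For all real x with −1 < x < 1 and all n ≥ 1, |P_n'(x)| ≤ (2^{3/2}/√π) · √n / (1 − x²)^{3/4}. -/
/-!
Write `ν = n + 1/2`, `t = cos θ` and `w(θ) = sin^{3/2} θ · P_n'(cos θ)`. Since `P_n'` solves the
Gegenbauer equation `(1 - t²) y'' - 4 t y' + (ν² - 9/4) y = 0`, `w` solves
`w'' + (ν² - 3 / (4 sin² θ)) w = 0`, and Sonin's function `S = w² + w'²/ν²` has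
`dS/dθ = 3 w w' / (2 ν² sin² θ)`. By AM-GM, `|dS/dθ| ≤ 3 S / (4 ν sin² θ)`, so integrating away from
`θ = π/2` gives `sin³ θ · P_n'(cos θ)² ≤ S(θ) ≤ S(π/2) · exp (3 cot θ / (4 ν))`. The explicit values
of `P_n(0)` give `S(π/2) ≤ 3n/4`, so wherever `cot θ ≤ ν` the bound is `(3/4) e^{3/4} n < 8n/π`.
Where `cot θ > ν` we have `sin θ < 1/ν`, and the crude bound `|P_n'| ≤ P_n'(1) = n(n+1)/2`
(the energy `y² + (1 - t²) y'² / (ν² - 9/4)` increases on `[0, 1]`) is enough.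
Everything is written in the variable `t`, where `sin θ = √(1 - t²)` and `cot θ = t / √(1 - t²)`.
-/

open Polynomial in
noncomputable def legendre : ℕ → Polynomial ℝ
  | 0 => 1
  | 1 => X
  | (n + 2) =>
      C ((2 * (n : ℝ) + 3) / ((n : ℝ) + 2)) * (X * legendre (n + 1))
        - C (((n : ℝ) + 1) / ((n : ℝ) + 2)) * legendre n

open Polynomial Real Set

theorem legendre_recurrence (n : ℕ) :
    (n + 2 : ℝ[X]) * legendre (n + 2)
      = (2 * n + 3 : ℝ[X]) * (X * legendre (n + 1)) - (n + 1 : ℝ[X]) * legendre n := by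
  have h : ((n : ℝ) + 2) ≠ 0 := by positivity
  have hC : (n + 2 : ℝ[X]) = C ((n : ℝ) + 2) := by rw [map_add, map_natCast, map_ofNat]
  simp only [legendre, hC, mul_sub, ← mul_assoc, ← C_mul, mul_div_cancel₀ _ h]
  simp only [map_add, map_mul, map_natCast, map_ofNat, map_one]

theorem derivative_legendre_succ_and (n : ℕ) :
    derivative (legendre (n + 1)) = X * derivative (legendre n) + (n + 1 : ℝ[X]) * legendre n ∧
      X * derivative (legendre (n + 1)) - derivative (legendre n)
        = (n + 1 : ℝ[X]) * legendre (n + 1) := by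
  induction n with
  | zero => constructor <;> simp [legendre]
  | succ n ih =>
    obtain ⟨hJ, hK⟩ := ih
    have hrec := legendre_recurrence n
    have hd := congrArg derivative hrec
    simp only [derivative_mul, derivative_natCast, derivative_add, derivative_ofNat,
      derivative_X, derivative_sub, derivative_one, mul_zero, zero_mul, zero_add, add_zero,
      one_mul] at hd
    have h2 : (n + 2 : ℝ[X]) ≠ 0 := by
      rw [← map_natCast C, ← map_ofNat C, ← map_add, Ne, C_eq_zero]; positivity
    push_cast
    constructor <;> apply mul_left_cancel₀ h2
    · linear_combination hd + (n + 1 : ℝ[X]) * hK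
    · linear_combination X * hd - (n + 2 : ℝ[X]) * hrec - (n + 2 : ℝ[X]) * hJ
        + (2 * n + 3 : ℝ[X]) * X * hK

theorem derivative_legendre_succ (n : ℕ) :
    derivative (legendre (n + 1)) = X * derivative (legendre n) + (n + 1 : ℝ[X]) * legendre n :=
  (derivative_legendre_succ_and n).1

theorem X_mul_derivative_legendre_succ (n : ℕ) :
    X * derivative (legendre (n + 1)) - derivative (legendre n)
      = (n + 1 : ℝ[X]) * legendre (n + 1) :=
  (derivative_legendre_succ_and n).2

theorem legendre_ode (n : ℕ) :
    (1 - X ^ 2) * derivative (derivative (legendre n)) - 2 * X * derivative (legendre n)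
      + (n * (n + 1) : ℝ[X]) * legendre n = 0 := by
  cases n with
  | zero => simp [legendre]
  | succ m =>
    have hJ := derivative_legendre_succ m
    have hK := X_mul_derivative_legendre_succ m
    have hI : (1 - X ^ 2) * derivative (legendre (m + 1))
        = (m + 1 : ℝ[X]) * (legendre m - X * legendre (m + 1)) := by
      linear_combination hJ - X * hK
    have hdI := congrArg derivative hI
    simp only [derivative_mul, derivative_sub, derivative_one, derivative_natCast,
      derivative_add, derivative_X, derivative_X_sq, zero_mul, zero_add, add_zero, zero_sub,
      one_mul, map_ofNat] at hdI
    push_cast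
    linear_combination hdI - (m + 1 : ℝ[X]) * hK

theorem derivative_legendre_ode (n : ℕ) :
    (1 - X ^ 2) * derivative (derivative (derivative (legendre n)))
      - 4 * X * derivative (derivative (legendre n))
      + (n * (n + 1) - 2 : ℝ[X]) * derivative (legendre n) = 0 := by
  have hd := congrArg derivative (legendre_ode n)
  simp only [derivative_add, derivative_sub, derivative_mul, derivative_one, derivative_natCast,
    derivative_X, derivative_X_sq, derivative_ofNat, derivative_zero, zero_mul, zero_add,
    add_zero, zero_sub, mul_one, map_ofNat] at hd
  linear_combination hd

theorem legendre_eval_one (n : ℕ) : (legendre n).eval 1 = 1 := by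
  induction n using Nat.twoStepInduction with
  | zero => simp [legendre]
  | one => simp [legendre]
  | more n ih₀ ih₁ =>
    have h := congrArg (eval 1) (legendre_recurrence n)
    simp only [eval_mul, eval_add, eval_sub, eval_natCast, eval_ofNat, eval_X, eval_one, ih₀,
      ih₁] at h
    exact mul_left_cancel₀ (by positivity : (n : ℝ) + 2 ≠ 0) (by linear_combination h)

theorem derivative_legendre_eval_one (n : ℕ) :
    (derivative (legendre n)).eval 1 = n * (n + 1) / 2 := by
  have h := congrArg (eval 1) (legendre_ode n)
  simp only [eval_add, eval_sub, eval_mul, eval_one, eval_pow, eval_X, eval_natCast, eval_ofNat,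
    eval_zero, legendre_eval_one] at h
  linear_combination -h / 2

theorem legendre_comp_neg_X (n : ℕ) : (legendre n).comp (-X) = (-1) ^ n * legendre n := by
  induction n using Nat.twoStepInduction with
  | zero => simp [legendre]
  | one => simp [legendre]
  | more n ih₀ ih₁ =>
    simp only [legendre, sub_comp, mul_comp, C_comp, X_comp, ih₀, ih₁]
    ring

theorem abs_derivative_legendre_eval_neg (n : ℕ) (x : ℝ) :
    |(derivative (legendre n)).eval (-x)| = |(derivative (legendre n)).eval x| := by
  have h := congrArg (fun p => (derivative p).eval x) (legendre_comp_neg_X n)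
  simp only [derivative_comp, derivative_neg, derivative_X, derivative_mul, derivative_pow,
    derivative_one, eval_mul, eval_neg, eval_one, eval_comp, eval_X, eval_pow,
    neg_zero, mul_zero, zero_mul, zero_add, neg_one_mul] at h
  rw [← abs_neg, h, abs_mul, abs_pow, abs_neg, abs_one, one_pow, one_mul]

theorem legendre_eval_zero_add_two (n : ℕ) :
    (legendre (n + 2)).eval 0 = -((n + 1) / (n + 2)) * (legendre n).eval 0 := by
  simp only [legendre, eval_sub, eval_mul, eval_C, eval_X, zero_mul, mul_zero]
  ring

theorem legendre_eval_zero_of_odd {n : ℕ} (hn : Odd n) : (legendre n).eval 0 = 0 := by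
  obtain ⟨m, rfl⟩ := hn
  induction m with
  | zero => simp [legendre]
  | succ m ih => rw [show 2 * (m + 1) + 1 = 2 * m + 1 + 2 by ring, legendre_eval_zero_add_two,
      ih, mul_zero]

theorem legendre_eval_zero_sq_le_of_even {n : ℕ} (hn : Even n) (hn₀ : n ≠ 0) :
    ((n : ℝ) + 1) * (legendre n).eval 0 ^ 2 ≤ 3 / 4 := by
  obtain ⟨m, rfl⟩ := hn
  rw [← two_mul] at hn₀ ⊢
  induction m, (by omega : 1 ≤ m) using Nat.le_induction with
  | base => norm_num [legendre]
  | succ m hm ih =>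
    rw [show 2 * (m + 1) = 2 * m + 2 by ring, legendre_eval_zero_add_two]
    push_cast at ih ⊢
    have hm : (0 : ℝ) ≤ m := m.cast_nonneg
    calc (2 * (m : ℝ) + 2 + 1) * (-((2 * m + 1) / (2 * m + 2)) * (legendre (2 * m)).eval 0) ^ 2
        = (2 * m + 1) * (2 * m + 3) / (2 * m + 2) ^ 2
            * ((2 * m + 1) * (legendre (2 * m)).eval 0 ^ 2) := by
          field_simp
          ring
      _ ≤ 1 * (3 / 4) := by
          gcongr
          · rw [div_le_one (by positivity)]
            nlinarith
          · exact ih (by omega)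
      _ = 3 / 4 := one_mul _

theorem derivative_legendre_eval_zero (n : ℕ) :
    (derivative (legendre n)).eval 0 = n * (legendre (n - 1)).eval 0 := by
  cases n with
  | zero => simp [legendre]
  | succ n => simpa using congrArg (eval 0) (derivative_legendre_succ n)

theorem derivative_derivative_legendre_eval_zero (n : ℕ) :
    (derivative (derivative (legendre n))).eval 0 = -(n * (n + 1)) * (legendre n).eval 0 := by
  have h := congrArg (eval 0) (legendre_ode n)
  simp only [eval_add, eval_sub, eval_mul, eval_one, eval_pow, eval_X, eval_natCast, eval_ofNat,
    eval_zero] at h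
  linear_combination h

theorem le_mul_exp_sub_of_deriv_le_mul {f f' φ φ' : ℝ → ℝ} {a b : ℝ} (hab : a ≤ b)
    (hf : ∀ t ∈ Icc a b, HasDerivAt f (f' t) t) (hφ : ∀ t ∈ Icc a b, HasDerivAt φ (φ' t) t)
    (hle : ∀ t ∈ Ioo a b, f' t ≤ φ' t * f t) : f b ≤ f a * exp (φ b - φ a) := by
  have hderiv : ∀ t ∈ Icc a b,
      HasDerivAt (fun s => f s * exp (-φ s)) ((f' t - φ' t * f t) * exp (-φ t)) t := by
    intro t ht
    exact ((hf t ht).mul (hφ t ht).neg.exp).congr_deriv (by simp only [Pi.neg_apply]; ring)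
  have hanti : AntitoneOn (fun s => f s * exp (-φ s)) (Icc a b) := by
    refine antitoneOn_of_hasDerivWithinAt_nonpos (f' := fun t => (f' t - φ' t * f t) * exp (-φ t))
      (convex_Icc a b)
      (fun t ht => (hderiv t ht).continuousAt.continuousWithinAt) (fun t ht => ?_) (fun t ht => ?_)
    · exact (hderiv t (interior_subset ht)).hasDerivWithinAt
    · rw [interior_Icc] at ht
      exact mul_nonpos_of_nonpos_of_nonneg (sub_nonpos.2 (hle t ht)) (exp_pos _).le
  have hba := hanti (left_mem_Icc.2 hab) (right_mem_Icc.2 hab) hab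
  calc f b = f b * exp (-φ b) * exp (φ b) := by rw [mul_assoc, ← exp_add]; simp
    _ ≤ f a * exp (-φ a) * exp (φ b) := mul_le_mul_of_nonneg_right hba (exp_pos _).le
    _ = f a * exp (φ b - φ a) := by rw [mul_assoc, ← exp_add]; ring_nf

theorem hasDerivAt_div_sqrt_one_sub_sq {t : ℝ} (ht : t ^ 2 < 1) :
    HasDerivAt (fun s => s / √(1 - s ^ 2)) (1 / ((1 - t ^ 2) * √(1 - t ^ 2))) t := by
  have hu : 0 < 1 - t ^ 2 := by linarith
  have hs := ((hasDerivAt_pow 2 t).const_sub 1).sqrt hu.ne'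
  refine ((hasDerivAt_id t).div hs (sqrt_pos.2 hu).ne').congr_deriv ?_
  have := sq_sqrt hu.le
  simp only [id, Nat.cast_ofNat, Nat.add_one_sub_one, pow_one]
  field_simp
  linear_combination -t ^ 2 * this

/-- With `t = cos θ` and `w(θ) = sin^{3/2} θ · y(cos θ)`, this is Sonin's function
`w² + (dw/dθ)² / ν²`. -/
noncomputable def soninFun (ν : ℝ) (y y' : ℝ → ℝ) (t : ℝ) : ℝ :=
  √(1 - t ^ 2) * ((1 - t ^ 2) * y t ^ 2 + ((1 - t ^ 2) * y' t - 3 / 2 * t * y t) ^ 2 / ν ^ 2)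

theorem soninFun_zero (ν : ℝ) (y y' : ℝ → ℝ) : soninFun ν y y' 0 = y 0 ^ 2 + y' 0 ^ 2 / ν ^ 2 := by
  simp [soninFun]

theorem mul_sq_le_soninFun (ν : ℝ) (y y' : ℝ → ℝ) {x : ℝ} (hx : x ^ 2 ≤ 1) :
    (1 - x ^ 2) * √(1 - x ^ 2) * y x ^ 2 ≤ soninFun ν y y' x := by
  have hu : 0 ≤ 1 - x ^ 2 := by linarith
  have : 0 ≤ √(1 - x ^ 2) * (((1 - x ^ 2) * y' x - 3 / 2 * x * y x) ^ 2 / ν ^ 2) := by positivity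
  rw [soninFun]
  linarith

section

variable {y y' y'' : ℝ → ℝ} (hy : ∀ t, HasDerivAt y (y' t) t) (hy' : ∀ t, HasDerivAt y' (y'' t) t)
include hy hy'

theorem sq_le_sq_one_of_ode {c : ℝ} (hc : 0 < c)
    (hode : ∀ t, (1 - t ^ 2) * y'' t - 4 * t * y' t + c * y t = 0) {x : ℝ} (hx₀ : 0 ≤ x)
    (hx₁ : x ≤ 1) : y x ^ 2 ≤ y 1 ^ 2 := by
  set g := fun t => y t ^ 2 + (1 - t ^ 2) * y' t ^ 2 / c
  have hg : ∀ t, HasDerivAt g (6 * t * y' t ^ 2 / c) t := by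
    intro t
    refine (((hy t).pow 2).add ((((hasDerivAt_pow 2 t).const_sub 1).mul
      ((hy' t).pow 2)).div_const c)).congr_deriv ?_
    simp only [Pi.pow_apply, Nat.cast_ofNat, Nat.add_one_sub_one, pow_one]
    field_simp
    linear_combination (2 * y' t) * hode t
  have hmono : MonotoneOn g (Icc 0 1) := by
    refine monotoneOn_of_hasDerivWithinAt_nonneg (convex_Icc 0 1)
      (fun t _ => (hg t).continuousAt.continuousWithinAt) (fun t _ => (hg t).hasDerivWithinAt)
      (fun t ht => ?_)
    rw [interior_Icc] at ht
    have := ht.1.le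
    positivity
  calc y x ^ 2 ≤ g x :=
        le_add_of_nonneg_right (div_nonneg (mul_nonneg (by nlinarith) (sq_nonneg _)) hc.le)
    _ ≤ g 1 := hmono ⟨hx₀, hx₁⟩ ⟨zero_le_one, le_rfl⟩ hx₁
    _ = y 1 ^ 2 := by simp [g]

variable {ν : ℝ} (hode : ∀ t, (1 - t ^ 2) * y'' t - 4 * t * y' t + (ν ^ 2 - 9 / 4) * y t = 0)
include hode

theorem hasDerivAt_soninFun (hν : ν ≠ 0) {t : ℝ} (ht : t ^ 2 < 1) :
    HasDerivAt (soninFun ν y y')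
      (3 * ((1 - t ^ 2) * y' t - 3 / 2 * t * y t) * y t / (2 * ν ^ 2 * √(1 - t ^ 2))) t := by
  have hu : 0 < 1 - t ^ 2 := by linarith
  have hU := (hasDerivAt_pow 2 t).const_sub 1
  have hR := (hU.mul (hy' t)).sub (((hasDerivAt_id t).const_mul (3 / 2)).mul (hy t))
  refine ((hU.sqrt hu.ne').mul ((hU.mul ((hy t).pow 2)).add
    ((hR.pow 2).div_const (ν ^ 2)))).congr_deriv ?_
  have hy'' : y'' t = (4 * t * y' t - (ν ^ 2 - 9 / 4) * y t) / (1 - t ^ 2) := by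
    rw [eq_div_iff hu.ne']; linear_combination hode t
  have hs := sq_sqrt hu.le
  have hs0 := (sqrt_pos.2 hu).ne'
  simp only [hy'', id, Pi.add_apply, Pi.sub_apply, Pi.mul_apply, Pi.pow_apply, Nat.cast_ofNat,
    Nat.add_one_sub_one, pow_one]
  field_simp
  rw [hs]
  ring

theorem soninFun_le (hν : 0 < ν) {x : ℝ} (hx₀ : 0 ≤ x) (hx₁ : x < 1) :
    soninFun ν y y' x ≤ soninFun ν y y' 0 * exp (3 / (4 * ν) * (x / √(1 - x ^ 2))) := by
  have hsq : ∀ t ∈ Icc 0 x, t ^ 2 < 1 := fun t ht => by nlinarith [ht.1, ht.2]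
  have hle : ∀ t ∈ Ioo 0 x,
      3 * ((1 - t ^ 2) * y' t - 3 / 2 * t * y t) * y t / (2 * ν ^ 2 * √(1 - t ^ 2))
        ≤ 3 / (4 * ν) * (1 / ((1 - t ^ 2) * √(1 - t ^ 2))) * soninFun ν y y' t := by
    intro t ht
    have hu : 0 < 1 - t ^ 2 := by linarith [hsq t (Ioo_subset_Icc_self ht)]
    set s := √(1 - t ^ 2)
    have hs : 0 < s := sqrt_pos.2 hu
    have hs2 : 1 - t ^ 2 = s ^ 2 := (sq_sqrt hu.le).symm
    set R := (1 - t ^ 2) * y' t - 3 / 2 * t * y t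
    have hS : soninFun ν y y' t = s * ((1 - t ^ 2) * y t ^ 2 + R ^ 2 / ν ^ 2) := rfl
    have hdiff : 3 / (4 * ν) * (1 / ((1 - t ^ 2) * s)) * soninFun ν y y' t
        - 3 * R * y t / (2 * ν ^ 2 * s) = 3 * (ν * s * y t - R) ^ 2 / (4 * ν ^ 3 * s ^ 2) := by
      rw [hS, hs2]
      field_simp
      ring
    have : 0 ≤ 3 * (ν * s * y t - R) ^ 2 / (4 * ν ^ 3 * s ^ 2) := by positivity
    linarith
  simpa using le_mul_exp_sub_of_deriv_le_mul hx₀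
    (fun t ht => hasDerivAt_soninFun hy hy' hode hν.ne' (hsq t ht))
    (fun t ht => (hasDerivAt_div_sqrt_one_sub_sq (hsq t ht)).const_mul (3 / (4 * ν))) hle

end

theorem derivative_legendre_eval_ode (n : ℕ) (t : ℝ) :
    (1 - t ^ 2) * (derivative (derivative (derivative (legendre n)))).eval t
      - 4 * t * (derivative (derivative (legendre n))).eval t
      + (((n : ℝ) + 1 / 2) ^ 2 - 9 / 4) * (derivative (legendre n)).eval t = 0 := by
  have h := congrArg (eval t) (derivative_legendre_ode n)
  simp only [eval_add, eval_sub, eval_mul, eval_pow, eval_one, eval_X, eval_natCast, eval_ofNat,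
    eval_zero] at h
  linear_combination h

theorem soninFun_legendre_zero_le (n : ℕ) (hn : 2 ≤ n) :
    soninFun (n + 1 / 2) (fun t => (derivative (legendre n)).eval t)
      (fun t => (derivative (derivative (legendre n))).eval t) 0 ≤ 3 / 4 * n := by
  have hn₀ : (0 : ℝ) < n := by positivity
  rw [soninFun_zero, derivative_legendre_eval_zero, derivative_derivative_legendre_eval_zero]
  rcases Nat.even_or_odd n with heven | hodd
  · have hP := legendre_eval_zero_sq_le_of_even heven (by omega)
    rw [legendre_eval_zero_of_odd (Nat.Even.sub_odd (by omega) heven odd_one)]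
    set p := (legendre n).eval 0
    calc (n * 0) ^ 2 + (-(n * (n + 1)) * p) ^ 2 / (n + 1 / 2) ^ 2
        ≤ (n * (n + 1) * p) ^ 2 / (n * (n + 1)) := by
          rw [mul_zero, zero_pow two_ne_zero, zero_add, neg_mul, neg_sq]
          gcongr
          nlinarith
      _ = n * ((n + 1) * p ^ 2) := by field_simp
      _ ≤ 3 / 4 * n := by nlinarith
  · have hP := legendre_eval_zero_sq_le_of_even (Nat.Odd.sub_odd hodd odd_one) (by omega)
    rw [legendre_eval_zero_of_odd hodd, show ((n - 1 : ℕ) : ℝ) + 1 = n by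
      rw [← Nat.cast_add_one, Nat.sub_add_cancel (by omega)]] at *
    calc ((n : ℝ) * (legendre (n - 1)).eval 0) ^ 2 + (-((n : ℝ) * (n + 1)) * 0) ^ 2 / (n + 1 / 2) ^ 2
        = (n : ℝ) * (n * (legendre (n - 1)).eval 0 ^ 2) := by ring
      _ ≤ (n : ℝ) * (3 / 4) := by gcongr
      _ = 3 / 4 * (n : ℝ) := mul_comm _ _

theorem three_div_four_mul_exp_three_div_four_le : 3 / 4 * exp (3 / 4) ≤ 8 / π := by
  have he : exp (3 / 4) ≤ exp 1 := exp_le_exp.2 (by norm_num)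
  rw [le_div_iff₀ pi_pos]
  nlinarith [exp_one_lt_d9, pi_lt_d2, exp_pos (3 / 4)]

theorem mul_derivative_legendre_eval_sq_le_of_le_mul_sqrt {n : ℕ} (hn : 2 ≤ n) {x : ℝ}
    (hx₀ : 0 ≤ x) (hx₁ : x < 1) (hx : x ≤ (n + 1 / 2) * √(1 - x ^ 2)) :
    (1 - x ^ 2) * √(1 - x ^ 2) * (derivative (legendre n)).eval x ^ 2 ≤ 8 / π * n := by
  have hν : (0 : ℝ) < n + 1 / 2 := by positivity
  have hs : 0 < √(1 - x ^ 2) := sqrt_pos.2 (by nlinarith)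
  have hφ : 3 / (4 * (n + 1 / 2)) * (x / √(1 - x ^ 2)) ≤ 3 / 4 := by
    calc 3 / (4 * (n + 1 / 2)) * (x / √(1 - x ^ 2)) ≤ 3 / (4 * (n + 1 / 2)) * (n + 1 / 2) := by
          gcongr
          rwa [div_le_iff₀ hs]
      _ = 3 / 4 := by field_simp
  calc (1 - x ^ 2) * √(1 - x ^ 2) * (derivative (legendre n)).eval x ^ 2
      ≤ soninFun (n + 1 / 2) (fun t => (derivative (legendre n)).eval t)
          (fun t => (derivative (derivative (legendre n))).eval t) x :=
        mul_sq_le_soninFun _ (fun t => (derivative (legendre n)).eval t) _ (by nlinarith)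
    _ ≤ soninFun (n + 1 / 2) (fun t => (derivative (legendre n)).eval t)
          (fun t => (derivative (derivative (legendre n))).eval t) 0
          * exp (3 / (4 * (n + 1 / 2)) * (x / √(1 - x ^ 2))) :=
        soninFun_le (fun t => Polynomial.hasDerivAt _ t) (fun t => Polynomial.hasDerivAt _ t)
          (derivative_legendre_eval_ode n) hν hx₀ hx₁
    _ ≤ 3 / 4 * n * exp (3 / 4) := by
        gcongr
        exact soninFun_legendre_zero_le n hn
    _ ≤ 8 / π * n := by
        rw [mul_right_comm]
        gcongr
        exact three_div_four_mul_exp_three_div_four_le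

theorem mul_derivative_legendre_eval_sq_le_of_mul_sqrt_lt {n : ℕ} (hn : 2 ≤ n) {x : ℝ}
    (hx₁ : x ≤ 1) (hx : (n + 1 / 2) * √(1 - x ^ 2) < x) :
    (1 - x ^ 2) * √(1 - x ^ 2) * (derivative (legendre n)).eval x ^ 2 ≤ 8 / π * n := by
  set ν : ℝ := n + 1 / 2 with hν
  set s := √(1 - x ^ 2)
  have hn' : (2 : ℝ) ≤ n := by exact_mod_cast hn
  have hx₀ : 0 < x := lt_of_le_of_lt (by positivity) hx
  have hs₀ : 0 ≤ s := sqrt_nonneg _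
  have hs : 1 - x ^ 2 = s ^ 2 := (sq_sqrt (by nlinarith)).symm
  have hsν : s * ν ≤ 1 := by linarith
  have hsup : (derivative (legendre n)).eval x ^ 2 ≤ (n * (n + 1) / 2) ^ 2 := by
    rw [← derivative_legendre_eval_one]
    exact sq_le_sq_one_of_ode (fun t => Polynomial.hasDerivAt _ t)
      (fun t => Polynomial.hasDerivAt _ t) (by nlinarith) (derivative_legendre_eval_ode n)
      hx₀.le hx₁
  have hval : (n * (n + 1) / 2 : ℝ) ^ 2 ≤ n * ν ^ 3 := by
    have : (n : ℝ) ≤ ν := by linarith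
    have : ((n : ℝ) + 1) / 2 ≤ ν := by linarith
    calc (n * (n + 1) / 2 : ℝ) ^ 2 = n * (n * ((n + 1) / 2) ^ 2) := by ring
      _ ≤ n * (ν * ν ^ 2) := by gcongr
      _ = n * ν ^ 3 := by ring
  calc (1 - x ^ 2) * s * (derivative (legendre n)).eval x ^ 2
      = s ^ 3 * (derivative (legendre n)).eval x ^ 2 := by rw [hs]; ring
    _ ≤ s ^ 3 * (n * ν ^ 3) := by gcongr; exact hsup.trans hval
    _ = (s * ν) ^ 3 * n := by ring
    _ ≤ 1 * n := by gcongr; exact pow_le_one₀ (by positivity) hsν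
    _ ≤ 8 / π * n := by
        gcongr
        rw [le_div_iff₀ pi_pos]
        linarith [pi_lt_d2]

theorem mul_derivative_legendre_eval_sq_le (n : ℕ) {x : ℝ} (hx₀ : 0 ≤ x) (hx₁ : x < 1) :
    (1 - x ^ 2) * √(1 - x ^ 2) * (derivative (legendre n)).eval x ^ 2 ≤ 8 / π * n := by
  match n with
  | 0 => simp [legendre]
  | 1 =>
    have hs : √(1 - x ^ 2) ≤ 1 := sqrt_le_one.2 (by nlinarith)
    have : 1 ≤ 8 / π := by rw [le_div_iff₀ pi_pos]; linarith [pi_lt_d2]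
    simp only [legendre, derivative_X, eval_one, Nat.cast_one]
    nlinarith [sqrt_nonneg (1 - x ^ 2)]
  | n + 2 =>
    rcases le_or_gt x ((↑(n + 2) + 1 / 2) * √(1 - x ^ 2)) with hx | hx
    · exact mul_derivative_legendre_eval_sq_le_of_le_mul_sqrt (by omega) hx₀ hx₁ hx
    · exact mul_derivative_legendre_eval_sq_le_of_mul_sqrt_lt (by omega) hx₁.le hx

open Polynomial in
theorem legendre_deriv_envelope_bound_general (n : ℕ) (x : ℝ)
    (hx : -1 < x) (hx' : x < 1) :
    |(derivative (legendre n)).eval x| ≤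
      2 ^ ((3 : ℝ) / 2) / Real.sqrt Real.pi *
        (Real.sqrt n / (1 - x ^ 2) ^ ((3 : ℝ) / 4)) := by
  wlog hx₀ : 0 ≤ x generalizing x
  · have := this (-x) (by linarith) (by linarith) (by linarith)
    rwa [abs_derivative_legendre_eval_neg, neg_sq] at this
  have hu : 0 < 1 - x ^ 2 := by nlinarith
  have h₂ : ((2 : ℝ) ^ ((3 : ℝ) / 2)) ^ 2 = 8 := by
    rw [← rpow_natCast, ← rpow_mul zero_le_two]; norm_num
  have hu₂ : ((1 - x ^ 2) ^ ((3 : ℝ) / 4)) ^ 2 = (1 - x ^ 2) * √(1 - x ^ 2) := by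
    rw [← rpow_natCast, ← rpow_mul hu.le, sqrt_eq_rpow, ← rpow_one_add' hu.le (by norm_num)]
    norm_num
  refine abs_le_of_sq_le_sq ?_ (by positivity)
  rw [mul_pow, div_pow, div_pow, h₂, hu₂, sq_sqrt pi_pos.le, sq_sqrt n.cast_nonneg,
    ← mul_div_assoc, le_div_iff₀ (by positivity), mul_comm]
  exact mul_derivative_legendre_eval_sq_le n hx₀ hx'

open Polynomial in
/-- Envelope bound for the derivative of the Legendre polynomial. -/
theorem legendre_deriv_envelope_bound (n : ℕ) (hn : 1 ≤ n) (x : ℝ)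
    (hx : -1 < x) (hx' : x < 1) :
    |(derivative (legendre n)).eval x| ≤
      2 ^ ((3 : ℝ) / 2) / Real.sqrt Real.pi *
        (Real.sqrt n / (1 - x ^ 2) ^ ((3 : ℝ) / 4)) :=
  legendre_deriv_envelope_bound_general n x hx hx'
end

section
/- Let −1 ≤ x ≤ 1 and let (p̃_n)_{n≥−1} be a real sequence with p̃_0 = 1 satisfying the perturbed Bonnet recurrence p̃_{n+1} = ((2n+1)·x·p̃_n − n·p̃_{n−1})/(n+1) + ε_n for n ≥ 0, where |ε_n| ≤ ε̄ for all n. Then |p̃_n − P_n(x)| ≤ (n+1)(n+2)·ε̄/4 for all n ≥ 0. -/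
namespace PowerSeries

variable {R : Type*} [CommRing R]

noncomputable def bonnetOp (x : R) (f : R⟦X⟧) : R⟦X⟧ :=
  (1 - 2 * C x * X + X ^ 2) * d⁄dX R f - (C x - X) * f

theorem coeff_bonnetOp_mk (x : R) (u : ℕ → R) (n : ℕ) :
    coeff n (bonnetOp x (mk u)) = (n + 1) * u (n + 1) - (2 * n + 1) * x * u n + n * u (n - 1) := by
  have h2 : (2 : R⟦X⟧) * C x = C (2 * x) := by rw [map_mul, map_ofNat]
  have hX2 : ∀ f : R⟦X⟧, X ^ 2 * f = X * (X * f) := fun f => by ring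
  rw [bonnetOp, h2]
  simp only [sub_mul, add_mul, one_mul, mul_assoc, hX2, map_sub, map_add, coeff_C_mul]
  rcases n with _ | _ | n <;>
    simp only [coeff_zero_X_mul, coeff_succ_X_mul, coeff_derivative, coeff_mk] <;> push_cast <;> ring

theorem derivative_mul_mul_quadratic (x : R) (f g : R⟦X⟧) :
    d⁄dX R (f * g * (1 - 2 * C x * X + X ^ 2)) = g * bonnetOp x f + f * bonnetOp x g := by
  have h2 : d⁄dX R (2 : R⟦X⟧) = 0 := by simpa using (d⁄dX R).map_natCast 2
  simp only [bonnetOp, Derivation.leibniz, map_add, map_sub, derivative_C, derivative_X,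
    derivative_one, Derivation.leibniz_pow, smul_eq_mul, h2]
  ring

variable [IsAddTorsionFree R] {x : R} {g : R⟦X⟧}

theorem mul_self_mul_quadratic_of_bonnetOp_eq_zero (hg : bonnetOp x g = 0) :
    g * g * (1 - 2 * C x * X + X ^ 2) = C (constantCoeff g ^ 2) :=
  derivative.ext (by rw [derivative_mul_mul_quadratic, hg, mul_zero, add_zero, derivative_C])
    (by simp [sq])

theorem exists_eq_mul_derivative_eq_of_bonnetOp (hg : bonnetOp x g = 0) (hg0 : constantCoeff g = 1)
    {e φ : R⟦X⟧} (he : bonnetOp x e = φ) :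
    ∃ k, e = g * k ∧ d⁄dX R k = g * φ ∧ constantCoeff k = constantCoeff e := by
  refine ⟨e * g * (1 - 2 * C x * X + X ^ 2), ?_, ?_, by simp [hg0]⟩
  · have := mul_self_mul_quadratic_of_bonnetOp_eq_zero hg
    rw [hg0, one_pow, map_one] at this
    linear_combination (-e) * this
  · rw [derivative_mul_mul_quadratic, hg, he, mul_zero, add_zero]

end PowerSeries

open Finset PowerSeries

theorem abs_coeff_mul_le_sum_range {f g : ℝ⟦X⟧} {a : ℕ → ℝ} (hf : ∀ n, |coeff n f| ≤ a n)
    (hg : ∀ n, |coeff n g| ≤ 1) (n : ℕ) : |coeff n (f * g)| ≤ ∑ i ∈ range (n + 1), a i := by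
  rw [coeff_mul, ← Nat.sum_antidiagonal_eq_sum_range_succ (fun i _ => a i)]
  refine (abs_sum_le_sum_abs _ _).trans (sum_le_sum fun ij _ => ?_)
  rw [abs_mul]
  exact (mul_le_of_le_one_right (abs_nonneg _) (hg _)).trans (hf _)

theorem sum_range_succ_cast_add_one (n : ℕ) :
    ∑ i ∈ range (n + 1), ((i : ℝ) + 1) = (n + 1) * (n + 2) / 2 := by
  induction n with
  | zero => norm_num
  | succ n ih => rw [sum_range_succ, ih]; push_cast; ring

theorem abs_coeff_mul_le_of_derivative_eq {g φ k : ℝ⟦X⟧} {c : ℝ} (hg : ∀ n, |coeff n g| ≤ 1)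
    (hφ : ∀ n, |coeff n φ| ≤ c * (n + 1)) (hk : d⁄dX ℝ k = g * φ) (hk0 : constantCoeff k = 0)
    (n : ℕ) : |coeff n (g * k)| ≤ (n + 1) * (n + 2) / 4 * c := by
  have hc : 0 ≤ c := by simpa using (abs_nonneg _).trans (hφ 0)
  have hk_le : ∀ j : ℕ, |coeff j k| ≤ c / 2 * (j + 1) := by
    rintro (_ | j)
    · rw [coeff_zero_eq_constantCoeff_apply, hk0, abs_zero]; positivity
    have hj := abs_coeff_mul_le_sum_range hφ hg j
    rw [mul_comm, ← hk, coeff_derivative, ← mul_sum, sum_range_succ_cast_add_one, abs_mul,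
      abs_of_pos (by positivity : (0 : ℝ) < j + 1)] at hj
    push_cast
    nlinarith
  rw [mul_comm]
  calc |coeff n (k * g)| ≤ ∑ i ∈ range (n + 1), c / 2 * ((i : ℝ) + 1) :=
        abs_coeff_mul_le_sum_range hk_le hg n
    _ = (n + 1) * (n + 2) / 4 * c := by rw [← mul_sum, sum_range_succ_cast_add_one]; ring

section Sonine

variable {x : ℝ} {u : ℕ → ℝ}

noncomputable def sonine (x : ℝ) (u : ℕ → ℝ) (n : ℕ) : ℝ :=
  (1 - x ^ 2) * u n ^ 2 + n / (n + 1) * (u (n - 1) - x * u n) ^ 2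

theorem sonine_succ_le
    (hu : ∀ n : ℕ, (n + 1) * u (n + 1) = (2 * n + 1) * x * u n - n * u (n - 1)) (n : ℕ) :
    sonine x u (n + 1) ≤ sonine x u n := by
  set a := u (n - 1) - x * u n
  have hn : (n : ℝ) + 1 ≠ 0 := by positivity
  have hnext : u (n + 1) = x * u n - n / (n + 1) * a := by
    field_simp; linear_combination hu n
  have key : sonine x u n - sonine x u (n + 1) =
      ((1 - x ^ 2) * u n + x * (n / (n + 1) * a)) ^ 2 / (n + 2) + n * a ^ 2 / (n + 1) ^ 2 := by
    simp only [sonine, Nat.add_sub_cancel, hnext]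
    push_cast
    field_simp
    ring
  have : 0 ≤ sonine x u n - sonine x u (n + 1) := by rw [key]; positivity
  linarith

theorem one_sub_sq_mul_sq_le
    (hu : ∀ n : ℕ, (n + 1) * u (n + 1) = (2 * n + 1) * x * u n - n * u (n - 1)) (n : ℕ) :
    (1 - x ^ 2) * u n ^ 2 ≤ (1 - x ^ 2) * u 0 ^ 2 :=
  calc (1 - x ^ 2) * u n ^ 2 ≤ sonine x u n := le_add_of_nonneg_right (by positivity)
    _ ≤ sonine x u 0 := antitone_nat_of_succ_le (sonine_succ_le hu) (Nat.zero_le n)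
    _ = (1 - x ^ 2) * u 0 ^ 2 := by simp [sonine]

end Sonine

theorem legendre_eval_succ (x : ℝ) (n : ℕ) :
    (n + 1) * (legendre (n + 1)).eval x
      = (2 * n + 1) * x * (legendre n).eval x - n * (legendre (n - 1)).eval x := by
  rcases n with _ | n
  · simp [legendre]
  · simp only [legendre, Polynomial.eval_sub, Polynomial.eval_mul, Polynomial.eval_C,
      Polynomial.eval_X, Nat.add_sub_cancel]
    field_simp
    push_cast
    ring

theorem abs_legendre_eval_le_one {x : ℝ} (hx : x ∈ Set.Icc (-1) 1) (n : ℕ) :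
    |(legendre n).eval x| ≤ 1 := by
  suffices Set.Ioo (-1 : ℝ) 1 ⊆ {y | |(legendre n).eval y| ≤ 1} by
    rw [← closure_Ioo (by norm_num : (-1 : ℝ) ≠ 1)] at hx
    exact (isClosed_le (by fun_prop) continuous_const).closure_subset_iff.2 this hx
  intro y ⟨hy, hy'⟩
  have h := one_sub_sq_mul_sq_le (u := fun m => (legendre m).eval y) (legendre_eval_succ y) n
  have hpos : 0 < 1 - y ^ 2 := by nlinarith
  simp only [legendre, Polynomial.eval_one, one_pow, mul_one] at h
  exact (sq_le_one_iff_abs_le_one _).1 (le_of_mul_le_mul_left (by rwa [mul_one]) hpos)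

theorem bonnetOp_legendre (x : ℝ) : bonnetOp x (mk fun n => (legendre n).eval x) = 0 := by
  ext n
  rw [coeff_bonnetOp_mk, legendre_eval_succ, map_zero]
  ring

/-- Error propagation in the perturbed Bonnet recurrence. -/
theorem perturbed_bonnet_error (x : ℝ) (hx : -1 ≤ x) (hx' : x ≤ 1)
    (p : ℕ → ℝ) (ε : ℕ → ℝ) (εbar : ℝ) (hε : ∀ n, |ε n| ≤ εbar)
    (h0 : p 0 = 1)
    (hrec : ∀ n : ℕ, p (n + 1) =
      ((2 * (n : ℝ) + 1) * x * p n - (n : ℝ) * p (n - 1)) / ((n : ℝ) + 1) + ε n) :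
    ∀ n : ℕ, |p n - (legendre n).eval x| ≤ ((n : ℝ) + 1) * ((n : ℝ) + 2) / 4 * εbar := by
  have he : bonnetOp x (mk fun n => p n - (legendre n).eval x) = mk fun n => (n + 1) * ε n := by
    ext n
    have hn : (n : ℝ) + 1 ≠ 0 := by positivity
    rw [coeff_bonnetOp_mk, coeff_mk, hrec n]
    field_simp
    linear_combination -(legendre_eval_succ x n)
  obtain ⟨k, hek, hk, hk0⟩ :=
    exists_eq_mul_derivative_eq_of_bonnetOp (bonnetOp_legendre x) (by simp [legendre]) he
  intro n
  rw [← coeff_mk n (fun n => p n - (legendre n).eval x), hek]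
  refine abs_coeff_mul_le_of_derivative_eq (fun n => ?_) (fun n => ?_) hk
    (by simp [hk0, h0, legendre]) n
  · rw [coeff_mk]
    exact abs_legendre_eval_le_one ⟨hx, hx'⟩ n
  · rw [coeff_mk, abs_mul, abs_of_pos (by positivity), mul_comm]
    exact mul_le_mul_of_nonneg_right (hε n) (by positivity)
end

section
/- Let x = x̂·2^{−t} with x̂ ∈ ℤ, t ≥ 0, |x| ≤ 1. Define integers p̂_0 = 2^t, p̂_1 = x̂, and p̂_{n+1} = ⌈((2n+1)·⌈x̂·p̂_n·2^{−t}⌋ − n·p̂_{n−1})/(n+1)⌋, where ⌈u⌋ denotes integer truncation. Then |p̂_n·2^{−t} − P_n(x)| ≤ 0.75·(n+1)(n+2)·2^{−t} for all n ≥ 0. -/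
/-- Truncation of a real number toward zero. -/
noncomputable def trunc (u : ℝ) : ℤ := if 0 ≤ u then ⌊u⌋ else ⌈u⌉

/-- The fixed-point iteration for the Legendre three-term recurrence. -/
noncomputable def phat (xh : ℤ) (t : ℕ) : ℕ → ℤ
  | 0 => 2 ^ t
  | 1 => xh
  | (n + 2) =>
      trunc (((2 * (n : ℝ) + 3) * (trunc ((xh : ℝ) * (phat xh t (n + 1) : ℝ) * 2 ^ (-(t : ℤ))) : ℝ)
        - ((n : ℝ) + 1) * (phat xh t n : ℝ)) / ((n : ℝ) + 2))

/-! The errors `e n = p̂ n · 2⁻ᵗ - Pₙ(x)` start at `e 0 = 0` and satisfy the three-term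
recurrence `(n + 1) e (n + 1) - (2n + 1) x e n + n e (n - 1) = rₙ` with a rounding residual
`|rₙ| ≤ 3 · 2⁻ᵗ (n + 1)`. In generating functions the recurrence reads
`(1 - 2xT + T²) E' + (T - x) E = R`, and the Legendre series `G = ∑ Pₙ(x) Tⁿ` solves the
homogeneous equation and satisfies `G² (1 - 2xT + T²) = 1`. Variation of constants, `E = G Z`,
then gives `Z' = G R`. As `|Pₙ(x)| ≤ 1` for `|x| ≤ 1`, the two convolutions give
`|Zⱼ| ≤ 3 · 2⁻ᵗ (j + 1) / 2` and `|e n| ≤ (3/4) (n + 1) (n + 2) 2⁻ᵗ`. -/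

open Finset.HasAntidiagonal (antidiagonal)

lemma eval_legendre_add_two (x : ℝ) (n : ℕ) :
    (legendre (n + 2)).eval x
      = ((2 * n + 3) * x * (legendre (n + 1)).eval x - (n + 1) * (legendre n).eval x) / (n + 2) := by
  simp only [legendre, Polynomial.eval_sub, Polynomial.eval_mul, Polynomial.eval_C,
    Polynomial.eval_X]
  ring

lemma sq_eval_legendre_le_one {x : ℝ} (hx : x ^ 2 < 1) (n : ℕ) : (legendre n).eval x ^ 2 ≤ 1 := by
  set P := fun n ↦ (legendre n).eval x with hP
  -- `(P (m + 1) - x P m)² + (1 - x²) P m²` is nonincreasing in `m`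
  have hV : ∀ m, (P (m + 1) - x * P m) ^ 2 + (1 - x ^ 2) * P m ^ 2 ≤ 1 - x ^ 2 := by
    intro m
    induction m with
    | zero => simp [hP, legendre]
    | succ m ih =>
      have hstep : P (m + 2) - x * P (m + 1)
          = (m + 1) / (m + 2) * (x * (P (m + 1) - x * P m) - (1 - x ^ 2) * P m) := by
        simp only [hP, eval_legendre_add_two]
        field_simp
        ring
      have hr : ((m + 1) / (m + 2) : ℝ) ^ 2 ≤ 1 := by
        rw [div_pow, div_le_one (by positivity)]
        gcongr
        linarith
      rw [hstep, mul_pow]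
      nlinarith [mul_le_mul_of_nonneg_right hr
        (sq_nonneg (x * (P (m + 1) - x * P m) - (1 - x ^ 2) * P m))]
  nlinarith [hV n, sq_nonneg (P (n + 1) - x * P n)]

lemma abs_eval_legendre_le_one {x : ℝ} (hx : |x| ≤ 1) (n : ℕ) : |(legendre n).eval x| ≤ 1 := by
  have hclosed : IsClosed {x : ℝ | |(legendre n).eval x| ≤ 1} :=
    isClosed_le (legendre n).continuous.abs continuous_const
  have hIoo : Set.Ioo (-1) 1 ⊆ {x : ℝ | |(legendre n).eval x| ≤ 1} := fun x hx ↦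
    sq_le_one_iff_abs_le_one _ |>.1 <| sq_eval_legendre_le_one (by nlinarith [hx.1, hx.2]) n
  have := hclosed.closure_subset_iff.2 hIoo
  rw [closure_Ioo (by norm_num)] at this
  exact this (abs_le.1 hx)

/-- At `n = 0` the truncated `y (n - 1)` carries the factor `0`, so
`legendreResidual x y 0 = y 1 - x * y 0`. -/
noncomputable def legendreResidual (x : ℝ) (y : ℕ → ℝ) (n : ℕ) : ℝ :=
  (n + 1) * y (n + 1) - (2 * n + 1) * x * y n + n * y (n - 1)

lemma legendreResidual_legendre (x : ℝ) :
    legendreResidual x (fun n ↦ (legendre n).eval x) = 0 := by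
  ext (_ | n)
  · simp [legendreResidual, legendre]
  · simp only [legendreResidual, eval_legendre_add_two, Pi.zero_apply]
    push_cast
    field_simp
    ring

lemma legendreResidual_sub_legendre (x : ℝ) (y : ℕ → ℝ) :
    legendreResidual x (fun k ↦ y k - (legendre k).eval x) = legendreResidual x y := by
  funext n
  have h := congrFun (legendreResidual_legendre x) n
  simp only [legendreResidual, Pi.zero_apply] at h ⊢
  linear_combination -h

section GeneratingFunction

open PowerSeries

lemma mk_legendreResidual (x : ℝ) (y : ℕ → ℝ) :
    (1 - C (2 * x) * X + X ^ 2) * d⁄dX ℝ (mk y) + (X - C x) * mk y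
      = mk (legendreResidual x y) := by
  have hD : constantCoeff (d⁄dX ℝ (mk y)) = y 1 := by
    simpa using coeff_derivative (mk y) 0
  ext (_ | _ | n) <;>
  simp [sub_mul, add_mul, mul_assoc, pow_two, coeff_succ_X_mul, coeff_derivative,
    legendreResidual, hD] <;> ring

noncomputable def legendreGenFun (x : ℝ) : ℝ⟦X⟧ := mk fun n ↦ (legendre n).eval x

lemma constantCoeff_legendreGenFun (x : ℝ) : constantCoeff (legendreGenFun x) = 1 := by
  simp [legendreGenFun, legendre]

lemma legendreGenFun_ode (x : ℝ) :
    (1 - C (2 * x) * X + X ^ 2) * d⁄dX ℝ (legendreGenFun x) + (X - C x) * legendreGenFun x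
      = 0 := by
  rw [legendreGenFun, mk_legendreResidual, legendreResidual_legendre]
  rfl

lemma legendreGenFun_sq_mul (x : ℝ) :
    legendreGenFun x ^ 2 * (1 - C (2 * x) * X + X ^ 2) = 1 := by
  apply derivative.ext
  · have hQ : d⁄dX ℝ (1 - C (2 * x) * X + X ^ 2 : ℝ⟦X⟧) = 2 * (X - C x) := by
      simp only [map_add, map_sub, derivative_one, Derivation.leibniz, Derivation.leibniz_pow,
        derivative_C, derivative_X, smul_eq_mul]
      simp only [map_mul, map_ofNat]
      ring
    simp only [Derivation.leibniz, Derivation.leibniz_pow, hQ, smul_eq_mul, derivative_one]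
    linear_combination (2 * legendreGenFun x) * legendreGenFun_ode x
  · simp [constantCoeff_legendreGenFun]

lemma derivative_mk_mul_inv_legendreGenFun (x : ℝ) (y : ℕ → ℝ) :
    d⁄dX ℝ (mk y * (legendreGenFun x)⁻¹) = legendreGenFun x * mk (legendreResidual x y) := by
  set G := legendreGenFun x
  obtain ⟨Z, hZ⟩ : ∃ Z, Z = mk y * G⁻¹ := ⟨_, rfl⟩
  have hG : G * G⁻¹ = 1 :=
    PowerSeries.mul_inv_cancel G (by simp [G, constantCoeff_legendreGenFun])
  have hY : mk y = G * Z := by rw [hZ, ← mul_assoc, mul_comm G, mul_assoc, hG, mul_one]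
  rw [← hZ, ← mk_legendreResidual, hY, Derivation.leibniz, smul_eq_mul, smul_eq_mul]
  linear_combination (-(G * Z)) * legendreGenFun_ode x - d⁄dX ℝ Z * legendreGenFun_sq_mul x

lemma sum_antidiagonal_snd_add_one (n : ℕ) :
    ∑ p ∈ antidiagonal n, ((p.2 : ℝ) + 1) = (n + 1) * (n + 2) / 2 := by
  induction n with
  | zero => simp
  | succ n ih =>
    rw [Finset.Nat.sum_antidiagonal_succ, ih]
    push_cast
    ring

lemma abs_sum_antidiagonal_mul_le {a b : ℕ → ℝ} {c : ℝ} (ha : ∀ i, |a i| ≤ 1)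
    (hb : ∀ j, |b j| ≤ c * (j + 1)) (n : ℕ) :
    |∑ p ∈ antidiagonal n, a p.1 * b p.2| ≤ c * ((n + 1) * (n + 2) / 2) := by
  calc |∑ p ∈ antidiagonal n, a p.1 * b p.2|
      ≤ ∑ p ∈ antidiagonal n, |a p.1| * |b p.2| := by
        simpa only [abs_mul] using Finset.abs_sum_le_sum_abs (fun p : ℕ × ℕ ↦ a p.1 * b p.2) _
    _ ≤ ∑ p ∈ antidiagonal n, c * ((p.2 : ℝ) + 1) :=
        Finset.sum_le_sum fun p _ ↦ (mul_le_of_le_one_left (abs_nonneg _) (ha _)).trans (hb _)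
    _ = c * ((n + 1) * (n + 2) / 2) := by rw [← Finset.mul_sum, sum_antidiagonal_snd_add_one]

theorem abs_le_of_abs_legendreResidual_le {x c : ℝ} (hx : |x| ≤ 1) {y : ℕ → ℝ} (hy : y 0 = 0)
    (hr : ∀ n, |legendreResidual x y n| ≤ c * (n + 1)) (n : ℕ) :
    |y n| ≤ c / 2 * ((n + 1) * (n + 2) / 2) := by
  set G := legendreGenFun x
  set Z := mk y * G⁻¹
  have hG : ∀ i, |coeff i G| ≤ 1 := fun i ↦ by
    simpa [G, legendreGenFun] using abs_eval_legendre_le_one hx i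
  have hZ : ∀ j, |coeff j Z| ≤ c / 2 * (j + 1) := by
    rintro (_ | j)
    · have hc : 0 ≤ c := by simpa using (abs_nonneg _).trans (hr 0)
      simp [Z, hy]
      positivity
    · have h := coeff_derivative Z j
      rw [derivative_mk_mul_inv_legendreGenFun, coeff_mul] at h
      have hbound := abs_sum_antidiagonal_mul_le hG
        (b := fun j ↦ coeff j (mk (legendreResidual x y))) (by simpa using hr) j
      rw [h, abs_mul, abs_of_pos (by positivity : (0 : ℝ) < j + 1)] at hbound
      refine le_of_mul_le_mul_right (hbound.trans_eq ?_) (by positivity : (0 : ℝ) < j + 1)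
      push_cast
      ring
  have hyZ : mk y = G * Z := by
    rw [mul_comm, mul_assoc,
      PowerSeries.inv_mul_cancel _ (by simp [G, constantCoeff_legendreGenFun]), mul_one]
  simpa [← coeff_mul, ← hyZ] using abs_sum_antidiagonal_mul_le hG hZ n

end GeneratingFunction

lemma abs_trunc_sub_le (u : ℝ) : |(trunc u : ℝ) - u| ≤ 1 := by
  unfold trunc
  split_ifs
  · rw [abs_le]
    constructor <;> linarith [Int.floor_le u, Int.lt_floor_add_one u]
  · rw [abs_le]
    constructor <;> linarith [Int.le_ceil u, Int.ceil_lt_add_one u]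

lemma abs_legendreResidual_phat_error_le (xh : ℤ) (t n : ℕ) :
    |legendreResidual ((xh : ℝ) * 2 ^ (-(t : ℤ)))
        (fun k ↦ (phat xh t k : ℝ) * 2 ^ (-(t : ℤ))
          - (legendre k).eval ((xh : ℝ) * 2 ^ (-(t : ℤ)))) n|
      ≤ 3 * 2 ^ (-(t : ℤ)) * (n + 1) := by
  rw [legendreResidual_sub_legendre]
  set ε : ℝ := 2 ^ (-(t : ℤ))
  have hε : 0 < ε := by positivity
  rcases n with _ | m
  · simp [legendreResidual, phat, ε]
  set q : ℝ := ((trunc ((xh : ℝ) * (phat xh t (m + 1) : ℝ) * ε) : ℤ) : ℝ)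
  set Y : ℝ := ((2 * m + 3) * q - (m + 1) * (phat xh t m : ℝ)) / (m + 2) with hY
  have hphat : (phat xh t (m + 2) : ℝ) = trunc Y := rfl
  have key : legendreResidual ((xh : ℝ) * ε) (fun k ↦ (phat xh t k : ℝ) * ε) (m + 1)
      = ε * ((m + 2) * ((trunc Y : ℝ) - Y) + (2 * m + 3) * (q - xh * phat xh t (m + 1) * ε)) := by
    have hY' : (m + 2) * Y = (2 * m + 3) * q - (m + 1) * (phat xh t m : ℝ) := by
      rw [hY]; field_simp
    simp only [legendreResidual, Nat.add_sub_cancel, hphat]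
    push_cast
    linear_combination ε * hY'
  have hround : |(m + 2) * ((trunc Y : ℝ) - Y) + (2 * m + 3) * (q - xh * phat xh t (m + 1) * ε)|
      ≤ (m + 2) * 1 + (2 * m + 3) * 1 := by
    refine (abs_add_le _ _).trans ?_
    rw [abs_mul, abs_mul, abs_of_pos (by positivity : (0 : ℝ) < m + 2),
      abs_of_pos (by positivity : (0 : ℝ) < 2 * m + 3)]
    gcongr
    · exact abs_trunc_sub_le Y
    · exact abs_trunc_sub_le _
  rw [key, abs_mul, abs_of_pos hε]
  calc ε * _ ≤ ε * ((m + 2) * 1 + (2 * m + 3) * 1) := by gcongr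
    _ ≤ 3 * ε * ((m + 1 : ℕ) + 1) := by push_cast; nlinarith

/-- Error bound for the fixed-point evaluation of Legendre polynomials. -/
theorem phat_error_bound (xh : ℤ) (t : ℕ)
    (hx : |(xh : ℝ) * 2 ^ (-(t : ℤ))| ≤ 1) (n : ℕ) :
    |(phat xh t n : ℝ) * 2 ^ (-(t : ℤ)) - (legendre n).eval ((xh : ℝ) * 2 ^ (-(t : ℤ)))|
      ≤ 0.75 * ((n : ℝ) + 1) * ((n : ℝ) + 2) * 2 ^ (-(t : ℤ)) := by
  refine (abs_le_of_abs_legendreResidual_le hx (by simp [phat, legendre])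
    (abs_legendreResidual_phat_error_le xh t) n).trans_eq ?_
  norm_num
  ring
end

section
/- For odd degree n = 2d+1, the Legendre polynomial has the expansion P_{2d+1}(x) = (−1)^d · x · Σ_{k=0}^{d} (−1)^k · 2^{−n} · C(n, d−k) · C(n+2k+1, n) · x^{2k}. -/
open Polynomial Finset Nat

theorem Finset.sum_range_two_mul {M : Type*} [AddCommMonoid M] (f : ℕ → M) (n : ℕ) :
    ∑ i ∈ range (2 * n), f i = ∑ k ∈ range n, (f (2 * k) + f (2 * k + 1)) := by
  induction n with
  | zero => simp
  | succ n ih =>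
    rw [mul_add, mul_one, sum_range_succ, sum_range_succ, sum_range_succ, ih, add_assoc]

noncomputable def legendreCoeff (m j : ℕ) : ℝ :=
  (-1) ^ j / 2 ^ (m + 2 * j) * (m + 2 * j).choose j * (2 * m + 2 * j).choose (m + 2 * j)

theorem legendreCoeff_eq_factorial (m j : ℕ) :
    legendreCoeff m j =
      (-1) ^ j / 2 ^ (m + 2 * j) * (2 * m + 2 * j)! / (j ! * m ! * (m + j)!) := by
  rw [legendreCoeff, Nat.cast_choose ℝ (by omega), Nat.cast_choose ℝ (by omega),
    show m + 2 * j - j = m + j by omega, show 2 * m + 2 * j - (m + 2 * j) = m by omega]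
  have := (m + 2 * j).factorial_pos
  field_simp

theorem legendreCoeff_zero_succ (j : ℕ) :
    (2 * j + 2) * legendreCoeff 0 (j + 1) = -(2 * j + 1) * legendreCoeff 0 j := by
  rw [legendreCoeff_eq_factorial, legendreCoeff_eq_factorial,
    show 2 * 0 + 2 * (j + 1) = 2 * j + 1 + 1 by ring]
  simp only [Nat.factorial_succ, zero_add, mul_zero]
  push_cast
  field_simp
  ring

theorem legendreCoeff_add_two_zero (m : ℕ) :
    (m + 2) * legendreCoeff (m + 2) 0 = (2 * m + 3) * legendreCoeff (m + 1) 0 := by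
  rw [legendreCoeff_eq_factorial, legendreCoeff_eq_factorial,
    show 2 * (m + 2) + 2 * 0 = 2 * (m + 1) + 2 * 0 + 1 + 1 by ring]
  simp only [Nat.factorial_succ, add_zero, mul_zero, pow_succ]
  push_cast
  field_simp
  ring

theorem legendreCoeff_succ_succ (m j : ℕ) :
    (m + 2 * j + 3) * legendreCoeff (m + 1) (j + 1) =
      (2 * m + 4 * j + 5) * legendreCoeff m (j + 1) -
        (m + 2 * j + 2) * legendreCoeff (m + 1) j := by
  rw [legendreCoeff_eq_factorial, legendreCoeff_eq_factorial, legendreCoeff_eq_factorial,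
    show 2 * (m + 1) + 2 * (j + 1) = 2 * m + 2 * (j + 1) + 1 + 1 by ring,
    show 2 * (m + 1) + 2 * j = 2 * m + 2 * (j + 1) by ring,
    show m + 1 + (j + 1) = m + (j + 1) + 1 by ring, show m + 1 + j = m + (j + 1) by ring,
    show m + 1 + 2 * (j + 1) = m + 2 * j + 1 + 1 + 1 by ring,
    show m + 2 * (j + 1) = m + 2 * j + 1 + 1 by ring]
  simp only [Nat.factorial_succ, pow_succ]
  push_cast
  field_simp
  ring

theorem natDegree_legendre_le (n : ℕ) : (legendre n).natDegree ≤ n := by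
  induction n using legendre.induct with
  | case1 => simp [legendre]
  | case2 => simp [legendre]
  | case3 n ih₁ ih₀ =>
    rw [legendre]
    refine (natDegree_sub_le _ _).trans (max_le ?_ ?_)
    · refine (natDegree_C_mul_le _ _).trans (natDegree_mul_le.trans ?_)
      simpa [add_comm 1] using ih₁
    · exact (natDegree_C_mul_le _ _).trans (ih₀.trans (by omega))

theorem coeff_legendre_of_lt {n m : ℕ} (h : n < m) : (legendre n).coeff m = 0 :=
  coeff_eq_zero_of_natDegree_lt ((natDegree_legendre_le n).trans_lt h)

theorem coeff_legendre_add_two (n m : ℕ) :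
    ((n : ℝ) + 2) * (legendre (n + 2)).coeff (m + 1) =
      (2 * n + 3) * (legendre (n + 1)).coeff m - (n + 1) * (legendre n).coeff (m + 1) := by
  rw [legendre, coeff_sub, coeff_C_mul, coeff_C_mul, coeff_X_mul]
  field_simp

theorem coeff_zero_legendre_add_two (n : ℕ) :
    ((n : ℝ) + 2) * (legendre (n + 2)).coeff 0 = -(n + 1) * (legendre n).coeff 0 := by
  rw [legendre, coeff_sub, coeff_C_mul, coeff_C_mul, coeff_X_mul_zero]
  field_simp
  ring

theorem coeff_legendre_add_two_mul : ∀ m j : ℕ,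
    (legendre (m + 2 * j)).coeff m = legendreCoeff m j
  | 0, 0 => by simp [legendre, legendreCoeff]
  | 1, 0 => by simp [legendre, legendreCoeff]
  | m + 2, 0 => by
    have h := coeff_legendre_add_two m (m + 1)
    rw [coeff_legendre_add_two_mul (m + 1) 0, coeff_legendre_of_lt (n := m) (by omega)] at h
    refine mul_left_cancel₀ (by positivity : (m : ℝ) + 2 ≠ 0) ?_
    linear_combination h - legendreCoeff_add_two_zero m
  | 0, j + 1 => by
    have h := coeff_zero_legendre_add_two (2 * j)
    rw [← zero_add (2 * j), coeff_legendre_add_two_mul 0 j, zero_add,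
      show 2 * j + 2 = 0 + 2 * (j + 1) by ring] at h
    refine mul_left_cancel₀ (by positivity : (2 * j : ℝ) + 2 ≠ 0) ?_
    push_cast at h
    linear_combination h - legendreCoeff_zero_succ j
  | m + 1, j + 1 => by
    have h := coeff_legendre_add_two (m + 1 + 2 * j) m
    rw [coeff_legendre_add_two_mul (m + 1) j, show m + 1 + 2 * j + 1 = m + 2 * (j + 1) by ring,
      coeff_legendre_add_two_mul m (j + 1),
      show m + 1 + 2 * j + 2 = m + 1 + 2 * (j + 1) by ring] at h
    refine mul_left_cancel₀ (by positivity : (m + 2 * j + 3 : ℝ) ≠ 0) ?_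
    push_cast at h
    linear_combination h - legendreCoeff_succ_succ m j

theorem coeff_legendre_add_two_mul_add_one : ∀ m j : ℕ,
    (legendre (m + 2 * j + 1)).coeff m = 0
  | 0, 0 => by simp [legendre]
  | m + 1, 0 => by
    have h := coeff_legendre_add_two m m
    rw [coeff_legendre_add_two_mul_add_one m 0, coeff_legendre_of_lt (n := m) (by omega)] at h
    simpa [show (m : ℝ) + 2 ≠ 0 by positivity] using h
  | 0, j + 1 => by
    have h := coeff_zero_legendre_add_two (2 * j + 1)
    rw [← zero_add (2 * j), coeff_legendre_add_two_mul_add_one 0 j, zero_add,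
      show 2 * j + 1 + 2 = 0 + 2 * (j + 1) + 1 by ring] at h
    simpa [show (2 * j + 1 : ℝ) + 2 ≠ 0 by positivity] using h
  | m + 1, j + 1 => by
    have h := coeff_legendre_add_two (m + 1 + 2 * j + 1) m
    rw [coeff_legendre_add_two_mul_add_one (m + 1) j,
      show m + 1 + 2 * j + 1 + 1 = m + 2 * (j + 1) + 1 by ring,
      coeff_legendre_add_two_mul_add_one m (j + 1),
      show m + 1 + 2 * j + 1 + 2 = m + 1 + 2 * (j + 1) + 1 by ring] at h
    simpa [show (m + 1 + 2 * j + 1 : ℝ) + 2 ≠ 0 by positivity] using h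

/-- Expansion of the odd-degree Legendre polynomial in the monomial basis. -/
theorem legendre_odd_expansion (d : ℕ) (x : ℝ) :
    (legendre (2 * d + 1)).eval x =
      (-1 : ℝ) ^ d * x * ∑ k ∈ Finset.range (d + 1),
        (-1 : ℝ) ^ k / 2 ^ (2 * d + 1) * ((2 * d + 1).choose (d - k) : ℝ)
          * ((2 * d + 2 * k + 2).choose (2 * d + 1) : ℝ) * x ^ (2 * k) := by
  rw [eval_eq_sum_range' ((natDegree_legendre_le _).trans_lt (by omega : 2 * d + 1 < 2 * (d + 1))),
    Finset.sum_range_two_mul, Finset.mul_sum]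
  refine Finset.sum_congr rfl fun k hk => ?_
  obtain ⟨j, rfl⟩ : ∃ j, d = k + j := ⟨d - k, by have := Finset.mem_range.mp hk; omega⟩
  rw [show 2 * (k + j) + 1 = 2 * k + 2 * j + 1 by ring, coeff_legendre_add_two_mul_add_one,
    show 2 * k + 2 * j + 1 = 2 * k + 1 + 2 * j by ring, coeff_legendre_add_two_mul, legendreCoeff,
    Nat.add_sub_cancel_left, show 2 * (k + j) + 2 * k + 2 = 2 * (2 * k + 1) + 2 * j by ring]
  have hsign : (-1 : ℝ) ^ (k + j) * (-1) ^ k = (-1) ^ j := by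
    rw [pow_add, mul_right_comm, ← mul_pow]; norm_num
  rw [← hsign]
  ring
end

section
/- For all complex z, |P_n(z)| ≤ (|z| + √(1+|z|²))^n. -/
/-!
Bounding the coefficients of Bonnet's recurrence by `2` and `1` gives
`‖P (n + 2) z‖ ≤ 2 ‖z‖ ‖P (n + 1) z‖ + ‖P n z‖`. The number `r = ‖z‖ + √(1 + ‖z‖²)` is the
positive root of `r² = 2 ‖z‖ r + 1`, so `n ↦ r ^ n` satisfies this majorizing recurrence with
equality and dominates `‖P n z‖` by induction.
-/

theorem le_pow_of_le_two_mul_add {u : ℕ → ℝ} {a r : ℝ} (ha : 0 ≤ a)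
    (hr : r ^ 2 = 2 * a * r + 1) (h0 : u 0 ≤ 1) (h1 : u 1 ≤ r)
    (hu : ∀ n, u (n + 2) ≤ 2 * a * u (n + 1) + u n) (n : ℕ) : u n ≤ r ^ n := by
  induction n using Nat.strong_induction_on with
  | _ n ih =>
    match n with
    | 0 => simpa using h0
    | 1 => simpa using h1
    | n + 2 =>
      calc u (n + 2) ≤ 2 * a * u (n + 1) + u n := hu n
        _ ≤ 2 * a * r ^ (n + 1) + r ^ n := by
          gcongr
          exacts [ih _ (by omega), ih _ (by omega)]
        _ = r ^ (n + 2) := by linear_combination (-r ^ n) * hr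

theorem add_sqrt_one_add_sq_sq (a : ℝ) :
    (a + √(1 + a ^ 2)) ^ 2 = 2 * a * (a + √(1 + a ^ 2)) + 1 := by
  have hsqrt : √(1 + a ^ 2) ^ 2 = 1 + a ^ 2 := Real.sq_sqrt (by positivity)
  linear_combination hsqrt

section

open Polynomial

theorem aeval_legendre_add_two {A : Type*} [Ring A] [Algebra ℝ A] (z : A) (n : ℕ) :
    aeval z (legendre (n + 2)) =
      ((2 * (n : ℝ) + 3) / (n + 2)) • (z * aeval z (legendre (n + 1)))
        - (((n : ℝ) + 1) / (n + 2)) • aeval z (legendre n) := by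
  simp only [legendre, map_sub, map_mul, aeval_C, aeval_X, Algebra.smul_def]

variable {A : Type*} [SeminormedRing A] [NormedAlgebra ℝ A]

theorem norm_aeval_legendre_add_two_le (z : A) (n : ℕ) :
    ‖aeval z (legendre (n + 2))‖ ≤
      2 * ‖z‖ * ‖aeval z (legendre (n + 1))‖ + ‖aeval z (legendre n)‖ := by
  have hn : (0 : ℝ) < n + 2 := by positivity
  have hc₁ : ‖(2 * (n : ℝ) + 3) / (n + 2)‖ ≤ 2 := by
    rw [Real.norm_of_nonneg (by positivity), div_le_iff₀ hn]; linarith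
  have hc₀ : ‖((n : ℝ) + 1) / (n + 2)‖ ≤ 1 := by
    rw [Real.norm_of_nonneg (by positivity), div_le_one hn]; linarith
  rw [aeval_legendre_add_two]
  calc _ ≤ ‖(2 * (n : ℝ) + 3) / (n + 2)‖ * (‖z‖ * ‖aeval z (legendre (n + 1))‖)
          + ‖((n : ℝ) + 1) / (n + 2)‖ * ‖aeval z (legendre n)‖ := by
        grw [norm_sub_le, norm_smul, norm_smul, norm_mul_le]
    _ ≤ 2 * (‖z‖ * ‖aeval z (legendre (n + 1))‖) + 1 * ‖aeval z (legendre n)‖ := by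
        gcongr
    _ = _ := by ring

theorem norm_aeval_legendre_le [NormOneClass A] (z : A) (n : ℕ) :
    ‖aeval z (legendre n)‖ ≤ (‖z‖ + √(1 + ‖z‖ ^ 2)) ^ n :=
  le_pow_of_le_two_mul_add (u := fun k ↦ ‖aeval z (legendre k)‖) (norm_nonneg z)
    (add_sqrt_one_add_sq_sq ‖z‖) (by simp [legendre]) (by simp [legendre])
    (norm_aeval_legendre_add_two_le z) n

end

/-- Growth bound for Legendre polynomials on the complex plane. -/
theorem legendre_complex_bound (n : ℕ) (z : ℂ) :
    ‖Polynomial.aeval z (legendre n)‖ ≤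
      (‖z‖ + Real.sqrt (1 + ‖z‖ ^ 2)) ^ n :=
  norm_aeval_legendre_le z n
end

section
/- For all integers n, k ≥ 1, the asymptotic-series coefficient C_{n,k} = Γ(k+1/2)²·Γ(n+1) / (π·2^k·Γ(n+k+3/2)·Γ(k+1)) satisfies C_{n,k} ≤ (1/(π·n^{1/2})) · k!·n!/(2^k·(n+k)!) ≤ (1/(π·n^{1/2})) · k!/(2n)^k. -/
/-!
Both bounds on `Γ` come from the log-convexity of `Γ` at the midpoint of `a` and `a + 1`:
`Γ (a + 1/2)² ≤ Γ a Γ (a + 1) = Γ (a + 1)² / a`. For `a = k` this gives `Γ (k + 1/2) ≤ k!`, and for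
`a = n + k + 1/2` it gives `√n (n + k)! ≤ Γ (n + k + 3/2)`. The second inequality of the theorem is
`n! nᵏ ≤ (n + k)!`.
-/

namespace Real

theorem Gamma_midpoint_sq_le {s t : ℝ} (hs : 0 < s) (ht : 0 < t) :
    Gamma ((s + t) / 2) ^ 2 ≤ Gamma s * Gamma t := by
  have h := Gamma_mul_add_mul_le_rpow_Gamma_mul_rpow_Gamma hs ht
    (by norm_num : (0 : ℝ) < 1 / 2) (by norm_num : (0 : ℝ) < 1 / 2) (by norm_num)
  have hmid : 1 / 2 * s + 1 / 2 * t = (s + t) / 2 := by ring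
  rw [hmid] at h
  calc Gamma ((s + t) / 2) ^ 2
      ≤ (Gamma s ^ (1 / 2 : ℝ) * Gamma t ^ (1 / 2 : ℝ)) ^ 2 := by
        gcongr
    _ = Gamma s * Gamma t := by
        rw [mul_pow, ← rpow_natCast, ← rpow_natCast, ← rpow_mul (Gamma_pos_of_pos hs).le,
          ← rpow_mul (Gamma_pos_of_pos ht).le]
        norm_num

theorem mul_Gamma_add_half_sq_le {a : ℝ} (ha : 0 < a) :
    a * Gamma (a + 1 / 2) ^ 2 ≤ Gamma (a + 1) ^ 2 := by
  have h := Gamma_midpoint_sq_le ha (by linarith : 0 < a + 1)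
  rw [show (a + (a + 1)) / 2 = a + 1 / 2 by ring] at h
  calc a * Gamma (a + 1 / 2) ^ 2 ≤ a * (Gamma a * Gamma (a + 1)) := by gcongr
    _ = Gamma (a + 1) ^ 2 := by rw [Gamma_add_one ha.ne']; ring

theorem sqrt_mul_Gamma_add_half_le {a : ℝ} (ha : 0 < a) :
    √a * Gamma (a + 1 / 2) ≤ Gamma (a + 1) := by
  refine le_of_pow_le_pow_left₀ two_ne_zero (Gamma_pos_of_pos (by linarith)).le ?_
  rw [mul_pow, sq_sqrt ha.le]
  exact mul_Gamma_add_half_sq_le ha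

theorem Gamma_add_half_le {a : ℝ} (ha : 1 ≤ a) : Gamma (a + 1 / 2) ≤ Gamma (a + 1) :=
  calc Gamma (a + 1 / 2) ≤ √a * Gamma (a + 1 / 2) :=
        le_mul_of_one_le_left (Gamma_pos_of_pos (by linarith)).le (one_le_sqrt.mpr ha)
    _ ≤ Gamma (a + 1) := sqrt_mul_Gamma_add_half_le (by linarith)

theorem Gamma_nat_add_half_le_factorial {k : ℕ} (hk : 1 ≤ k) :
    Gamma ((k : ℝ) + 1 / 2) ≤ k.factorial := by
  rw [← Gamma_nat_eq_factorial]
  exact Gamma_add_half_le (by exact_mod_cast hk)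

theorem sqrt_mul_factorial_add_le_Gamma (n k : ℕ) :
    √n * ((n + k).factorial : ℝ) ≤ Gamma ((n : ℝ) + k + 3 / 2) := by
  have h := sqrt_mul_Gamma_add_half_le (by positivity : (0 : ℝ) < n + k + 1 / 2)
  rw [show (n : ℝ) + k + 1 / 2 + 1 / 2 = ((n + k : ℕ) : ℝ) + 1 by push_cast; ring,
    Gamma_nat_eq_factorial, show (n : ℝ) + k + 1 / 2 + 1 = n + k + 3 / 2 by ring] at h
  refine le_trans ?_ h
  gcongr
  linarith [(k.cast_nonneg : (0 : ℝ) ≤ k)]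

end Real

theorem Nat.factorial_mul_pow_le_factorial_add (n k : ℕ) : n.factorial * n ^ k ≤ (n + k).factorial :=
  calc n.factorial * n ^ k ≤ n.factorial * (n + 1) ^ k := by gcongr; omega
    _ ≤ (n + k).factorial := Nat.factorial_mul_pow_le_factorial

theorem factorial_mul_factorial_div_le {n : ℕ} (hn : 1 ≤ n) (k : ℕ) :
    (k.factorial : ℝ) * n.factorial / (2 ^ k * (n + k).factorial) ≤ k.factorial / (2 * n) ^ k := by
  have hfac : (n.factorial : ℝ) * n ^ k ≤ (n + k).factorial := by
    exact_mod_cast Nat.factorial_mul_pow_le_factorial_add n k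
  have hn' : (0 : ℝ) < n := by exact_mod_cast hn
  rw [mul_pow, div_le_div_iff₀ (by positivity) (by positivity)]
  calc (k.factorial : ℝ) * n.factorial * (2 ^ k * n ^ k)
      = k.factorial * 2 ^ k * (n.factorial * n ^ k) := by ring
    _ ≤ k.factorial * 2 ^ k * (n + k).factorial := by gcongr
    _ = k.factorial * (2 ^ k * (n + k).factorial) := by ring

open Real in
/-- Bounds for the coefficients of the asymptotic expansion of Legendre polynomials. -/
theorem asymptotic_coeff_bound (n k : ℕ) (hn : 1 ≤ n) (hk : 1 ≤ k) :
    Gamma ((k : ℝ) + 1 / 2) ^ 2 * Gamma ((n : ℝ) + 1) /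
        (π * 2 ^ k * Gamma ((n : ℝ) + (k : ℝ) + 3 / 2) * Gamma ((k : ℝ) + 1))
      ≤ 1 / (π * Real.sqrt n) * ((k.factorial : ℝ) * (n.factorial : ℝ) /
          (2 ^ k * ((n + k).factorial : ℝ))) ∧
    1 / (π * Real.sqrt n) * ((k.factorial : ℝ) * (n.factorial : ℝ) /
          (2 ^ k * ((n + k).factorial : ℝ)))
      ≤ 1 / (π * Real.sqrt n) * ((k.factorial : ℝ) / (2 * (n : ℝ)) ^ k) := by
  refine ⟨?_, mul_le_mul_of_nonneg_left (factorial_mul_factorial_div_le hn k) (by positivity)⟩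
  set G := Gamma ((n : ℝ) + k + 3 / 2)
  rw [Gamma_nat_eq_factorial, Gamma_nat_eq_factorial]
  calc Gamma ((k : ℝ) + 1 / 2) ^ 2 * n.factorial / (π * 2 ^ k * G * k.factorial)
      ≤ (k.factorial : ℝ) ^ 2 * n.factorial / (π * 2 ^ k * G * k.factorial) := by
        gcongr
        exact Gamma_nat_add_half_le_factorial hk
    _ = k.factorial * n.factorial / (π * 2 ^ k * G) := by field_simp
    _ ≤ k.factorial * n.factorial / (π * 2 ^ k * (√n * (n + k).factorial)) := by
        gcongr
        exact sqrt_mul_factorial_add_le_Gamma n k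
    _ = 1 / (π * √n) * (k.factorial * n.factorial / (2 ^ k * (n + k).factorial)) := by
        field_simp
end
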